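/- arXiv:1511.00978 — 5 statements merged into one kernel-verified Lean document; each statement's English description precedes it below -/
import Mathlib

section
/- Let Q₁, Q₂, H₁, H₂ be bounded operators on a complex Hilbert space satisfying the N=1² algebra: {Q_i, Q_i†} = 2H_i for i ∈ {1,2}, {Q_i, Q_j†} = 0 for i ≠ j, and {Q_i, Q_j} = 0 for all i, j. Then H₁ and H₂ commute: [H₁, H₂] = 0. -/
open ContinuousLinearMap

/-!
Each `Hᵢ` is half the anticommutator `{Qᵢ, Qᵢ†}`. An element anticommuting with both factors
of a product commutes with the product, so `Q₂` and `Q₂†`, which anticommute with `Q₁` and `Q₁†`,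
commute with `{Q₁, Q₁†}`, and hence so does `{Q₂, Q₂†}`.
-/

section Anticommutator

variable {R : Type*} [Ring R]

theorem commute_mul_of_anticommute {a b c : R} (hb : a * b + b * a = 0)
    (hc : a * c + c * a = 0) : Commute a (b * c) := by
  rw [add_eq_zero_iff_eq_neg] at hb hc
  calc a * (b * c) = -(b * a) * c := by rw [← mul_assoc, hb]
    _ = b * c * a := by rw [neg_mul, mul_assoc, hc, mul_neg, neg_neg, mul_assoc]

theorem commute_anticommutator_of_anticommute {a b c : R} (hb : a * b + b * a = 0)
    (hc : a * c + c * a = 0) : Commute a (b * c + c * b) :=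
  (commute_mul_of_anticommute hb hc).add_right (commute_mul_of_anticommute hc hb)

variable [StarRing R]

theorem star_anticommutator_eq_zero {a b : R} (h : a * b + b * a = 0) :
    star a * star b + star b * star a = 0 := by
  simpa only [star_add, star_mul, star_zero, add_comm] using congrArg star h

theorem commute_anticommutator_star_of_anticommute {p q : R} (h : p * q + q * p = 0)
    (h' : p * star q + star q * p = 0) :
    Commute (p * star p + star p * p) (q * star q + star q * q) := by
  have hq : Commute q (p * star p + star p * p) := by
    refine commute_anticommutator_of_anticommute ?_ ?_
    · rwa [add_comm]
    · simpa only [star_star, add_comm] using star_anticommutator_eq_zero h'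
  have hq' : Commute (star q) (p * star p + star p * p) := by
    refine commute_anticommutator_of_anticommute ?_ ?_
    · rwa [add_comm]
    · simpa only [add_comm] using star_anticommutator_eq_zero h
  exact ((hq.mul_left hq').add_left (hq'.mul_left hq)).symm

end Anticommutator

theorem n1sq_hamiltonians_commute_general
    {E : Type*} [NormedAddCommGroup E] [InnerProductSpace ℂ E] [CompleteSpace E]
    (Q₁ Q₂ H₁ H₂ : E →L[ℂ] E)
    (h11 : Q₁ * adjoint Q₁ + adjoint Q₁ * Q₁ = (2 : ℂ) • H₁)
    (h22 : Q₂ * adjoint Q₂ + adjoint Q₂ * Q₂ = (2 : ℂ) • H₂)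
    (h12 : Q₁ * adjoint Q₂ + adjoint Q₂ * Q₁ = 0)
    (hnil : ∀ i j : Fin 2, (![Q₁, Q₂] i) * (![Q₁, Q₂] j)
        + (![Q₁, Q₂] j) * (![Q₁, Q₂] i) = 0) :
    H₁ * H₂ - H₂ * H₁ = 0 := by
  simp only [← star_eq_adjoint] at h11 h22 h12
  have hQ : Q₁ * Q₂ + Q₂ * Q₁ = 0 := hnil 0 1
  have hcomm := commute_anticommutator_star_of_anticommute hQ h12
  rw [h11, h22] at hcomm
  have hH : Commute H₁ H₂ := by
    simpa using (hcomm.smul_left (2⁻¹ : ℂ)).smul_right (2⁻¹ : ℂ)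
  exact sub_eq_zero.mpr hH.eq

/-- In the N=1² algebra, the two Hamiltonians commute. -/
theorem n1sq_hamiltonians_commute
    {E : Type*} [NormedAddCommGroup E] [InnerProductSpace ℂ E] [CompleteSpace E]
    (Q₁ Q₂ H₁ H₂ : E →L[ℂ] E)
    (h11 : Q₁ * adjoint Q₁ + adjoint Q₁ * Q₁ = (2 : ℂ) • H₁)
    (h22 : Q₂ * adjoint Q₂ + adjoint Q₂ * Q₂ = (2 : ℂ) • H₂)
    (h12 : Q₁ * adjoint Q₂ + adjoint Q₂ * Q₁ = 0)
    (h21 : Q₂ * adjoint Q₁ + adjoint Q₁ * Q₂ = 0)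
    (hnil : ∀ i j : Fin 2, (![Q₁, Q₂] i) * (![Q₁, Q₂] j)
        + (![Q₁, Q₂] j) * (![Q₁, Q₂] i) = 0) :
    H₁ * H₂ - H₂ * H₁ = 0 :=
  n1sq_hamiltonians_commute_general Q₁ Q₂ H₁ H₂ h11 h22 h12 hnil
end

section
/- Let Q₁, Q₂, H₁, H₂ be bounded operators on a complex Hilbert space satisfying the N=1² algebra: {Q_i, Q_i†} = 2H_i for i ∈ {1,2}, {Q_i, Q_j†} = 0 for i ≠ j, and {Q_i, Q_j} = 0 for all i, j. Let t₁, t₂ be complex numbers with t₁ ≠ 0 and t₂ ≠ 0, and set Q_t = t₁Q₁ + t₂Q₂. Then the kernel of {Q_t, Q_t†} equals ker H₁ ∩ ker H₂. (Physically: away from the two special points of the ℂP¹ family, the vacuum spectrum consists exactly of states annihilated by both Hamiltonians.) -/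
/-!
The quadratic form of `{Q, Q†}` is `‖Q† x‖² + ‖Q x‖²`, so `{Q, Q†}` annihilates exactly the
vectors on which its quadratic form vanishes. The mixed relations `{Qᵢ, Qⱼ†} = 0` cancel the
cross terms, giving `{Q_t, Q_t†} = |t₁|² {Q₁, Q₁†} + |t₂|² {Q₂, Q₂†} = 2|t₁|² H₁ + 2|t₂|² H₂`;
with both weights positive, the sum of the two nonnegative quadratic forms vanishes only when
each does.
-/

open ContinuousLinearMap
open scoped InnerProductSpace

namespace ContinuousLinearMap

variable {𝕜 E : Type*} [RCLike 𝕜] [NormedAddCommGroup E] [InnerProductSpace 𝕜 E] [CompleteSpace E]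

theorem re_inner_anticomm_adjoint_apply_self (Q : E →L[𝕜] E) (x : E) :
    RCLike.re ⟪(Q * adjoint Q + adjoint Q * Q) x, x⟫_𝕜 = ‖adjoint Q x‖ ^ 2 + ‖Q x‖ ^ 2 := by
  rw [add_apply, mul_apply_eq_comp, mul_apply_eq_comp, inner_add_left,
    adjoint_inner_left, ← adjoint_inner_right Q, map_add, inner_self_eq_norm_sq,
    inner_self_eq_norm_sq]

theorem anticomm_adjoint_apply_eq_zero_iff_re_inner (Q : E →L[𝕜] E) (x : E) :
    (Q * adjoint Q + adjoint Q * Q) x = 0 ↔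
      RCLike.re ⟪(Q * adjoint Q + adjoint Q * Q) x, x⟫_𝕜 = 0 := by
  refine ⟨fun hx => by rw [hx, inner_zero_left, map_zero], fun hx => ?_⟩
  rw [re_inner_anticomm_adjoint_apply_self,
    add_eq_zero_iff_of_nonneg (sq_nonneg _) (sq_nonneg _)] at hx
  simp only [pow_eq_zero_iff two_ne_zero, norm_eq_zero] at hx
  simp [hx.1, hx.2]

theorem anticomm_adjoint_smul_add_smul {Q₁ Q₂ : E →L[𝕜] E}
    (h12 : Q₁ * adjoint Q₂ + adjoint Q₂ * Q₁ = 0) (h21 : Q₂ * adjoint Q₁ + adjoint Q₁ * Q₂ = 0)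
    (a b : 𝕜) :
    (a • Q₁ + b • Q₂) * adjoint (a • Q₁ + b • Q₂) + adjoint (a • Q₁ + b • Q₂) * (a • Q₁ + b • Q₂)
      = ((‖a‖ ^ 2 : ℝ) : 𝕜) • (Q₁ * adjoint Q₁ + adjoint Q₁ * Q₁)
        + ((‖b‖ ^ 2 : ℝ) : 𝕜) • (Q₂ * adjoint Q₂ + adjoint Q₂ * Q₂) := by
  have c12 : adjoint Q₂ * Q₁ = -(Q₁ * adjoint Q₂) := eq_neg_of_add_eq_zero_right h12
  have c21 : adjoint Q₁ * Q₂ = -(Q₂ * adjoint Q₁) := eq_neg_of_add_eq_zero_right h21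
  simp only [map_add, map_smulₛₗ, add_mul, mul_add, smul_mul_assoc, mul_smul_comm,
    c12, c21, RCLike.ofReal_pow, ← RCLike.mul_conj]
  module

theorem anticomm_adjoint_smul_add_smul_apply_eq_zero_iff {Q₁ Q₂ : E →L[𝕜] E}
    (h12 : Q₁ * adjoint Q₂ + adjoint Q₂ * Q₁ = 0) (h21 : Q₂ * adjoint Q₁ + adjoint Q₁ * Q₂ = 0)
    {a b : 𝕜} (ha : a ≠ 0) (hb : b ≠ 0) (x : E) :
    ((a • Q₁ + b • Q₂) * adjoint (a • Q₁ + b • Q₂)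
        + adjoint (a • Q₁ + b • Q₂) * (a • Q₁ + b • Q₂)) x = 0 ↔
      (Q₁ * adjoint Q₁ + adjoint Q₁ * Q₁) x = 0 ∧ (Q₂ * adjoint Q₂ + adjoint Q₂ * Q₂) x = 0 := by
  rw [anticomm_adjoint_apply_eq_zero_iff_re_inner, anticomm_adjoint_smul_add_smul h12 h21,
    anticomm_adjoint_apply_eq_zero_iff_re_inner Q₁, anticomm_adjoint_apply_eq_zero_iff_re_inner Q₂,
    add_apply, smul_apply, smul_apply, inner_add_left, inner_smul_left, inner_smul_left,
    RCLike.conj_ofReal, RCLike.conj_ofReal, map_add, RCLike.re_ofReal_mul, RCLike.re_ofReal_mul]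
  rw [re_inner_anticomm_adjoint_apply_self, re_inner_anticomm_adjoint_apply_self,
    add_eq_zero_iff_of_nonneg (by positivity) (by positivity), mul_eq_zero, mul_eq_zero]
  simp [ha, hb]

end ContinuousLinearMap

theorem n1sq_generic_vacua_general
    {E : Type*} [NormedAddCommGroup E] [InnerProductSpace ℂ E] [CompleteSpace E]
    (Q₁ Q₂ H₁ H₂ : E →L[ℂ] E)
    (h11 : Q₁ * adjoint Q₁ + adjoint Q₁ * Q₁ = (2 : ℂ) • H₁)
    (h22 : Q₂ * adjoint Q₂ + adjoint Q₂ * Q₂ = (2 : ℂ) • H₂)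
    (h12 : Q₁ * adjoint Q₂ + adjoint Q₂ * Q₁ = 0)
    (h21 : Q₂ * adjoint Q₁ + adjoint Q₁ * Q₂ = 0)
    (t₁ t₂ : ℂ) (ht₁ : t₁ ≠ 0) (ht₂ : t₂ ≠ 0)
    (Qt : E →L[ℂ] E) (hQt : Qt = t₁ • Q₁ + t₂ • Q₂) :
    LinearMap.ker ((Qt * adjoint Qt + adjoint Qt * Qt : E →L[ℂ] E) : E →ₗ[ℂ] E) =
      LinearMap.ker (H₁ : E →ₗ[ℂ] E) ⊓ LinearMap.ker (H₂ : E →ₗ[ℂ] E) := by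
  ext x
  simp only [LinearMap.mem_ker, Submodule.mem_inf, coe_coe, hQt,
    anticomm_adjoint_smul_add_smul_apply_eq_zero_iff h12 h21 ht₁ ht₂, h11, h22, smul_apply,
    smul_eq_zero, two_ne_zero, false_or]

/-- In the N=1² algebra, for `t₁ ≠ 0` and `t₂ ≠ 0`, the kernel
of `{Q_t, Q_t†}` equals `ker H₁ ∩ ker H₂`. -/
theorem n1sq_generic_vacua
    {E : Type*} [NormedAddCommGroup E] [InnerProductSpace ℂ E] [CompleteSpace E]
    (Q₁ Q₂ H₁ H₂ : E →L[ℂ] E)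
    (h11 : Q₁ * adjoint Q₁ + adjoint Q₁ * Q₁ = (2 : ℂ) • H₁)
    (h22 : Q₂ * adjoint Q₂ + adjoint Q₂ * Q₂ = (2 : ℂ) • H₂)
    (h12 : Q₁ * adjoint Q₂ + adjoint Q₂ * Q₁ = 0)
    (h21 : Q₂ * adjoint Q₁ + adjoint Q₁ * Q₂ = 0)
    (hnil : ∀ i j : Fin 2, (![Q₁, Q₂] i) * (![Q₁, Q₂] j)
        + (![Q₁, Q₂] j) * (![Q₁, Q₂] i) = 0)
    (t₁ t₂ : ℂ) (ht₁ : t₁ ≠ 0) (ht₂ : t₂ ≠ 0)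
    (Qt : E →L[ℂ] E) (hQt : Qt = t₁ • Q₁ + t₂ • Q₂) :
    LinearMap.ker ((Qt * adjoint Qt + adjoint Qt * Qt : E →L[ℂ] E) : E →ₗ[ℂ] E) =
      LinearMap.ker (H₁ : E →ₗ[ℂ] E) ⊓ LinearMap.ker (H₂ : E →ₗ[ℂ] E) :=
  n1sq_generic_vacua_general Q₁ Q₂ H₁ H₂ h11 h22 h12 h21 t₁ t₂ ht₁ ht₂ Qt hQt
end

section
/- Let Q₁, Q₂, H₁, H₂ be bounded operators on a complex Hilbert space satisfying the N=1² algebra: {Q_i, Q_i†} = 2H_i for i ∈ {1,2}, {Q_i, Q_j†} = 0 for i ≠ j, and {Q_i, Q_j} = 0 for all i, j. For complex numbers t₁, t₂ set Q_t = t₁Q₁ + t₂Q₂ and Q_t̃ = −conj(t₂)Q₁ + conj(t₁)Q₂. Then {Q_t, Q_t̃†} = 2 t₁ t₂ (H₂ − H₁). In particular, if t₁ t₂ ≠ 0 and H₁ ≠ H₂, the pair (Q_t, Q_t̃) fails to close into an N=2 supersymmetry algebra. -/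
open ContinuousLinearMap

/-- In the N=1² algebra, `{Q_t, Q_t̃†} = 2 t₁ t₂ (H₂ − H₁)`;
in particular, if `t₁t₂ ≠ 0` and `H₁ ≠ H₂`, the pair `(Q_t, Q_t̃)` fails to
close into an N=2 supersymmetry algebra. -/
theorem n1sq_obstruction_to_n2
    {E : Type*} [NormedAddCommGroup E] [InnerProductSpace ℂ E] [CompleteSpace E]
    (Q₁ Q₂ H₁ H₂ : E →L[ℂ] E)
    (h11 : Q₁ * adjoint Q₁ + adjoint Q₁ * Q₁ = (2 : ℂ) • H₁)
    (h22 : Q₂ * adjoint Q₂ + adjoint Q₂ * Q₂ = (2 : ℂ) • H₂)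
    (h12 : Q₁ * adjoint Q₂ + adjoint Q₂ * Q₁ = 0)
    (h21 : Q₂ * adjoint Q₁ + adjoint Q₁ * Q₂ = 0)
    (hnil : ∀ i j : Fin 2, (![Q₁, Q₂] i) * (![Q₁, Q₂] j)
        + (![Q₁, Q₂] j) * (![Q₁, Q₂] i) = 0)
    (t₁ t₂ : ℂ) (Qt Qtt : E →L[ℂ] E)
    (hQt : Qt = t₁ • Q₁ + t₂ • Q₂)
    (hQtt : Qtt = (-(starRingEnd ℂ) t₂) • Q₁ + ((starRingEnd ℂ) t₁) • Q₂) :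
    Qt * adjoint Qtt + adjoint Qtt * Qt = ((2 : ℂ) * t₁ * t₂) • (H₂ - H₁) ∧
      (t₁ * t₂ ≠ 0 → H₁ ≠ H₂ → Qt * adjoint Qtt + adjoint Qtt * Qt ≠ 0) := by
  have hadj : adjoint Qtt = (-t₂) • adjoint Q₁ + t₁ • adjoint Q₂ := by
    rw [hQtt, ← star_eq_adjoint, star_add, star_smul, star_smul, star_eq_adjoint, star_eq_adjoint]
    simp only [star_neg, RingHomCompTriple.comp_apply, RingHom.id_apply, Complex.star_def, Complex.conj_conj]
  have key : Qt * adjoint Qtt + adjoint Qtt * Qt = ((2 : ℂ) * t₁ * t₂) • (H₂ - H₁) := by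
    have expand : Qt * adjoint Qtt + adjoint Qtt * Qt =
        (-(t₁*t₂)) • (Q₁ * adjoint Q₁ + adjoint Q₁ * Q₁)
        + (t₁*t₁) • (Q₁ * adjoint Q₂ + adjoint Q₂ * Q₁)
        + (-(t₂*t₂)) • (Q₂ * adjoint Q₁ + adjoint Q₁ * Q₂)
        + (t₁*t₂) • (Q₂ * adjoint Q₂ + adjoint Q₂ * Q₂) := by
      rw [hQt, hadj]
      simp only [add_mul, mul_add, smul_mul_smul_comm, smul_add, smul_smul, neg_smul,
        smul_neg, mul_neg, neg_mul]
      module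
    rw [expand, h11, h22, h12, h21]
    simp only [smul_zero, smul_smul, smul_sub]
    module
  refine ⟨key, fun ht hne ↦ ?_⟩
  rw [key]
  intro h
  rcases smul_eq_zero.mp h with h' | h'
  · have : (2:ℂ) ≠ 0 := two_ne_zero
    rw [mul_assoc, mul_eq_zero] at h'
    exact ht (h'.resolve_left this)
  · exact hne (by rw [sub_eq_zero] at h'; exact h'.symm)
end

section
/- Let L_I, L_J, Λ_I, Λ_J, D be linear endomorphisms of a complex vector space satisfying [L_I, L_J] = 0, [Λ_I, Λ_J] = 0, [L_I, Λ_I] = D, [L_J, Λ_J] = D, [D, Λ_J] = −2Λ_J, and [D, L_I] = 2L_I. Define M_{IJ} = [L_I, Λ_J]. Then [M_{IJ}, Λ_I] = −2Λ_J and [M_{IJ}, L_J] = 2L_I. (These are the commutation relations, derived via the Jacobi identity, in Verbitsky's construction of the so(5) action on the cohomology of a hyper-Kähler manifold.) -/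
/-- Commutation relations in Verbitsky's construction of the
so(5) action: with `M_{IJ} = [L_I, Λ_J]`, one has `[M_{IJ}, Λ_I] = −2Λ_J`
and `[M_{IJ}, L_J] = 2L_I`. -/
theorem verbitsky_commutators
    {V : Type*} [AddCommGroup V] [Module ℂ V]
    (LI LJ ΛI ΛJ D : Module.End ℂ V)
    (hLL : LI * LJ - LJ * LI = 0)
    (hΛΛ : ΛI * ΛJ - ΛJ * ΛI = 0)
    (hI : LI * ΛI - ΛI * LI = D)
    (hJ : LJ * ΛJ - ΛJ * LJ = D)
    (hDΛJ : D * ΛJ - ΛJ * D = -((2 : ℂ) • ΛJ))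
    (hDLI : D * LI - LI * D = (2 : ℂ) • LI)
    (MIJ : Module.End ℂ V) (hM : MIJ = LI * ΛJ - ΛJ * LI) :
    MIJ * ΛI - ΛI * MIJ = -((2 : ℂ) • ΛJ) ∧
      MIJ * LJ - LJ * MIJ = (2 : ℂ) • LI := by
  subst hM
  constructor
  · rw [← hDΛJ, ← hI]
    linear_combination (norm := noncomm_ring) hΛΛ * LI - LI * hΛΛ
  · rw [← hDLI, ← hJ]
    linear_combination (norm := noncomm_ring) hLL * ΛJ - ΛJ * hLL
end

section
/- Let V be a finite-dimensional complex vector space and let h, e, f be linear endomorphisms of V satisfying the sl₂ relations [h, e] = 2e, [h, f] = −2f, [e, f] = h. Then for every natural number k, the restriction of e^k to the eigenspace of h with eigenvalue −k is a linear isomorphism onto the eigenspace of h with eigenvalue k. (This is the representation-theoretic content of the hard Lefschetz theorem.) -/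
/-!
Injectivity of `e ^ k` on the `(-k)`-eigenspace goes by induction on `dim V`. Suppose `v ≠ 0` has
weight `-k` and `e ^ k v = 0`, and let `w = e ^ p v` be the last nonzero vector of its `e`-string,
so `p < k`. Then `w` is primitive, hence of weight `n = 2p - k ∈ ℕ` with `n < k`, and
`U = span {f ^ j w}` is stable under `h, e, f` with weights `n, n - 2, …, -n`, all above `-k`.
By induction `v` vanishes in `V ⧸ U`, i.e. `v ∈ U`, which has no vector of weight `-k`.
Since `(-h, f, e)` satisfies the same relations, `f ^ k` is injective the other way, and the
dimension count makes `e ^ k` bijective.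
-/

open Module Submodule Set

namespace IsSl2Triple.HasPrimitiveVectorWith

open LieModule

variable {R L M : Type*} [CommRing R] [LieRing L] [LieAlgebra R L]
  [AddCommGroup M] [Module R M] [LieRingModule L M] [LieModule R L M]
  {h e f : L} {t : IsSl2Triple h e f} {m : M} {μ : R}

lemma span_range_pow_toEnd_f_le_comap_h (P : t.HasPrimitiveVectorWith m μ) :
    span R (range fun j : ℕ ↦ (toEnd R L M f ^ j) m) ≤
      (span R (range fun j : ℕ ↦ (toEnd R L M f ^ j) m)).comap (toEnd R L M h) := by
  rw [span_le, range_subset_iff]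
  intro j
  simpa [P.lie_h_pow_toEnd_f j] using
    smul_mem _ (μ - 2 * j) (subset_span (mem_range_self j))

lemma span_range_pow_toEnd_f_le_comap_e (P : t.HasPrimitiveVectorWith m μ) :
    span R (range fun j : ℕ ↦ (toEnd R L M f ^ j) m) ≤
      (span R (range fun j : ℕ ↦ (toEnd R L M f ^ j) m)).comap (toEnd R L M e) := by
  rw [span_le, range_subset_iff]
  rintro (_ | j)
  · simp [P.lie_e]
  · simpa [P.lie_e_pow_succ_toEnd_f j] using
      smul_mem _ ((j + 1) * (μ - j)) (subset_span (mem_range_self j))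

lemma disjoint_span_range_pow_toEnd_f_eigenspace [IsDomain R] [CharZero R] [IsNoetherian R M]
    [IsTorsionFree R M] (P : t.HasPrimitiveVectorWith m μ) {n k : ℕ} (hn : μ = n)
    (hnk : n < k) :
    Disjoint (span R (range fun j : ℕ ↦ (toEnd R L M f ^ j) m))
      ((toEnd R L M h).eigenspace (-k)) := by
  refine ((toEnd R L M h).eigenspaces_iSupIndep (-k)).symm.mono_left ?_
  rw [span_le, range_subset_iff]
  intro j
  rcases le_or_gt j n with hj | hj
  · have hne : (n : R) - 2 * j ≠ -k := by
      intro h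
      have : (n : ℤ) - 2 * j = -k := Int.cast_injective (α := R) (by push_cast; exact h)
      omega
    refine mem_iSup_of_mem _ (mem_iSup_of_mem hne ?_)
    simpa [Module.End.mem_eigenspace_iff, ← hn] using P.lie_h_pow_toEnd_f j
  · obtain ⟨i, rfl⟩ := Nat.exists_eq_add_of_lt hj
    rw [show n + i + 1 = i + (n + 1) by omega, pow_add, Module.End.mul_apply,
      P.pow_toEnd_f_eq_zero_of_eq_nat hn, map_zero]
    exact zero_mem _

end IsSl2Triple.HasPrimitiveVectorWith

namespace Module.End

variable {R M : Type*} [CommRing R] [AddCommGroup M] [Module R M] {h e : Module.End R M} {c μ : R}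

lemma apply_mem_eigenspace_of_mul_sub_mul_eq_smul (hhe : h * e - e * h = c • e) {v : M}
    (hv : v ∈ h.eigenspace μ) : e v ∈ h.eigenspace (μ + c) := by
  rw [mem_eigenspace_iff] at hv ⊢
  have := congr($hhe v)
  simp only [LinearMap.sub_apply, mul_apply, LinearMap.smul_apply, hv, map_smul] at this
  rw [add_smul, ← this, add_sub_cancel]

lemma pow_apply_mem_eigenspace_of_mul_sub_mul_eq_smul (hhe : h * e - e * h = c • e) {v : M}
    (hv : v ∈ h.eigenspace μ) (j : ℕ) : (e ^ j) v ∈ h.eigenspace (μ + j * c) := by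
  induction j with
  | zero => simpa using hv
  | succ j ih =>
    rw [pow_succ', mul_apply]
    convert apply_mem_eigenspace_of_mul_sub_mul_eq_smul hhe ih using 2
    push_cast
    ring

lemma span_range_pow_apply_le_comap (φ : Module.End R M) (v : M) :
    span R (range fun j : ℕ ↦ (φ ^ j) v) ≤
      (span R (range fun j : ℕ ↦ (φ ^ j) v)).comap φ := by
  rw [span_le, range_subset_iff]
  intro j
  simpa [← mul_apply, ← pow_succ'] using subset_span (mem_range_self (j + 1))

lemma eigenspace_neg (h : Module.End R M) (μ : R) : (-h).eigenspace μ = h.eigenspace (-μ) := by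
  ext v
  simp [neg_eq_iff_eq_neg]

end Module.End

section

variable {K V : Type*} [Field K] [AddCommGroup V] [Module K V]

/-- The relations of `IsSl2Triple` without `h ≠ 0`: these describe all representations of `sl₂`,
trivial ones included, and so pass to quotients. -/
structure IsSl2Representation (h e f : Module.End K V) : Prop where
  lie_h_e : h * e - e * h = (2 : K) • e
  lie_h_f : h * f - f * h = -((2 : K) • f)
  lie_e_f : e * f - f * e = h

namespace IsSl2Representation

attribute [local instance] LieRing.ofAssociativeRing

variable {h e f : Module.End K V}

lemma symm (hr : IsSl2Representation h e f) : IsSl2Representation (-h) f e where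
  lie_h_e := by rw [← neg_neg ((2 : K) • f), ← hr.lie_h_f]; noncomm_ring
  lie_h_f := by rw [← hr.lie_h_e]; noncomm_ring
  lie_e_f := by rw [← hr.lie_e_f]; noncomm_ring

lemma isSl2Triple (hr : IsSl2Representation h e f) (hh : h ≠ 0) : IsSl2Triple h e f where
  h_ne_zero := hh
  lie_e_f := by rw [Ring.lie_def, hr.lie_e_f]
  lie_h_e_nsmul := by rw [Ring.lie_def, hr.lie_h_e, two_smul, two_nsmul]
  lie_h_f_nsmul := by rw [Ring.lie_def, hr.lie_h_f, two_smul, two_nsmul]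

lemma mapQ (hr : IsSl2Representation h e f) (U : Submodule K V) (hUh : U ≤ U.comap h)
    (hUe : U ≤ U.comap e) (hUf : U ≤ U.comap f) :
    IsSl2Representation (U.mapQ U h hUh) (U.mapQ U e hUe) (U.mapQ U f hUf) where
  lie_h_e := by
    ext x
    simpa using congr(U.mkQ ($hr.lie_h_e x))
  lie_h_f := by
    ext x
    simpa using congr(U.mkQ ($hr.lie_h_f x))
  lie_e_f := by
    ext x
    simpa using congr(U.mkQ ($hr.lie_e_f x))

lemma pow_apply_mem_eigenspace (hr : IsSl2Representation h e f) {k : ℕ} {v : V}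
    (hv : v ∈ h.eigenspace (-k)) : (e ^ k) v ∈ h.eigenspace k := by
  convert Module.End.pow_apply_mem_eigenspace_of_mul_sub_mul_eq_smul hr.lie_h_e hv k using 2
  ring

variable [CharZero K]

lemma exists_hasPrimitiveVectorWith_lt [FiniteDimensional K V] (hr : IsSl2Representation h e f)
    (hh : h ≠ 0) {k : ℕ} {v : V} (hv : v ∈ h.eigenspace (-k)) (hv0 : v ≠ 0)
    (hek : (e ^ k) v = 0) :
    ∃ n < k, ∃ w : V, (hr.isSl2Triple hh).HasPrimitiveVectorWith w (n : K) := by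
  obtain ⟨p, hp, hp1⟩ := Nat.exists_not_and_succ_of_not_zero_of_exists
    (p := fun j ↦ (e ^ j) v = 0) (by simpa using hv0) ⟨k, hek⟩
  have hpk : p < k := by
    by_contra! hkp
    apply hp
    rw [← Nat.sub_add_cancel hkp, pow_add, Module.End.mul_apply, hek, map_zero]
  have P : (hr.isSl2Triple hh).HasPrimitiveVectorWith ((e ^ p) v) (-k + p * 2 : K) :=
    ⟨hp, Module.End.mem_eigenspace_iff.mp
      (Module.End.pow_apply_mem_eigenspace_of_mul_sub_mul_eq_smul hr.lie_h_e hv p),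
      by simpa [← Module.End.mul_apply, ← pow_succ'] using hp1⟩
  obtain ⟨n, hn⟩ := P.exists_nat
  refine ⟨n, ?_, _, hn ▸ P⟩
  have : (n : ℤ) = -k + p * 2 := Int.cast_injective (α := K) (by push_cast; exact hn.symm)
  omega

lemma eq_zero_of_pow_apply_eq_zero [FiniteDimensional K V] (hr : IsSl2Representation h e f)
    {k : ℕ} {v : V} (hv : v ∈ h.eigenspace (-k)) (hek : (e ^ k) v = 0) : v = 0 := by
  induction hd : finrank K V using Nat.strong_induction_on generalizing V with
  | _ d ih =>
    by_contra hv0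
    have hh : h ≠ 0 := by
      rintro rfl
      have hk : k ≠ 0 := by rintro rfl; simp_all
      simp [hk, hv0, eq_comm (a := (0 : V))] at hv
    obtain ⟨n, hnk, w, P⟩ := hr.exists_hasPrimitiveVectorWith_lt hh hv hv0 hek
    set U := span K (range fun j : ℕ ↦ (f ^ j) w)
    have hUh : U ≤ U.comap h := by simpa using P.span_range_pow_toEnd_f_le_comap_h
    have hUe : U ≤ U.comap e := by simpa using P.span_range_pow_toEnd_f_le_comap_e
    have hUf : U ≤ U.comap f := f.span_range_pow_apply_le_comap w
    have hvU : v ∈ U := by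
      rw [← Submodule.Quotient.mk_eq_zero]
      refine ih _ ?_ (hr.mapQ U hUh hUe hUf) ?_ ?_ rfl
      · have hU : finrank K U ≠ 0 := finrank_eq_zero.not.mpr <|
          (Submodule.ne_bot_iff U).mpr ⟨w, subset_span ⟨0, by simp⟩, P.ne_zero⟩
        have := U.finrank_quotient_add_finrank
        omega
      · rw [Module.End.mem_eigenspace_iff] at hv ⊢
        simp [hv]
      · rw [← mapQ_pow U hUe k]
        simp [hek]
    have hdisj := P.disjoint_span_range_pow_toEnd_f_eigenspace rfl hnk
    simp only [LieModule.toEnd_module_end, LieHom.coe_id, id] at hdisj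
    exact hv0 (hdisj.le_bot ⟨hvU, hv⟩)

lemma injective_restrict_pow [FiniteDimensional K V] (hr : IsSl2Representation h e f) (k : ℕ) :
    Function.Injective ((e ^ k).restrict fun _ ↦ hr.pow_apply_mem_eigenspace (k := k)) :=
  (injective_iff_map_eq_zero _).mpr fun v hv ↦
    Subtype.ext (hr.eq_zero_of_pow_apply_eq_zero v.2 congr(($hv : V)))

lemma finrank_eigenspace_neg_eq [FiniteDimensional K V] (hr : IsSl2Representation h e f)
    (k : ℕ) : finrank K (h.eigenspace (-k)) = finrank K (h.eigenspace k) := by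
  refine le_antisymm (LinearMap.finrank_le_finrank_of_injective (hr.injective_restrict_pow k)) ?_
  have := LinearMap.finrank_le_finrank_of_injective (hr.symm.injective_restrict_pow k)
  rwa [Module.End.eigenspace_neg, Module.End.eigenspace_neg, neg_neg] at this

end IsSl2Representation

end

/-- For an sl₂-triple `(h, e, f)` acting on a finite-dimensional
complex vector space, `e^k` restricts to a linear isomorphism from the
`(−k)`-eigenspace of `h` onto the `k`-eigenspace of `h` (hard Lefschetz). -/
theorem sl2_hard_lefschetz
    {V : Type*} [AddCommGroup V] [Module ℂ V] [FiniteDimensional ℂ V]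
    (h e f : Module.End ℂ V)
    (hhe : h * e - e * h = (2 : ℂ) • e)
    (hhf : h * f - f * h = -((2 : ℂ) • f))
    (hef : e * f - f * e = h) :
    ∀ k : ℕ, ∃ g : (Module.End.eigenspace h (-(k : ℂ))) ≃ₗ[ℂ]
        (Module.End.eigenspace h (k : ℂ)),
      ∀ v : Module.End.eigenspace h (-(k : ℂ)), (g v : V) = (e ^ k) (v : V) := by
  intro k
  have hr : IsSl2Representation h e f := ⟨hhe, hhf, hef⟩
  exact ⟨LinearMap.linearEquivOfInjective _ (hr.injective_restrict_pow k)
    (hr.finrank_eigenspace_neg_eq k), fun _ ↦ rfl⟩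
end
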